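/- If h is an ideal of the Lie algebra g that strictly contains the span of E3, then h contains h3 = span{E3, E31, A31} or h3' = span{E3, E32, A32}. -/

import Mathlib

open Matrix

attribute [local instance 100] LieRing.ofAssociativeRing

abbrev M6 := Matrix (Fin 6) (Fin 6) ℝ

noncomputable def E1 : M6 := !![0,0,0,1,0,0; 0,0,0,0,0,0; 0,0,0,0,0,0; 0,0,0,0,0,0; 0,0,0,0,0,0; 0,0,0,0,0,0]
noncomputable def E2 : M6 := !![0,0,0,0,0,0; 0,0,0,0,1,0; 0,0,0,0,0,0; 0,0,0,0,0,0; 0,0,0,0,0,0; 0,0,0,0,0,0]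
noncomputable def E3 : M6 := !![0,0,0,0,0,0; 0,0,0,0,0,0; 0,0,0,0,0,1; 0,0,0,0,0,0; 0,0,0,0,0,0; 0,0,0,0,0,0]
noncomputable def E31 : M6 := !![0,0,0,0,0,1; 0,0,0,0,0,0; 0,0,0,1,0,0; 0,0,0,0,0,0; 0,0,0,0,0,0; 0,0,0,0,0,0]
noncomputable def E32 : M6 := !![0,0,0,0,0,0; 0,0,0,0,0,1; 0,0,0,0,1,0; 0,0,0,0,0,0; 0,0,0,0,0,0; 0,0,0,0,0,0]
noncomputable def A1 : M6 := !![(1/2),0,0,0,0,0; 0,0,0,0,0,0; 0,0,0,0,0,0; 0,0,0,(-1/2),0,0; 0,0,0,0,0,0; 0,0,0,0,0,0]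
noncomputable def A2 : M6 := !![0,0,0,0,0,0; 0,(1/2),0,0,0,0; 0,0,0,0,0,0; 0,0,0,0,0,0; 0,0,0,0,(-1/2),0; 0,0,0,0,0,0]
noncomputable def A3 : M6 := !![0,0,0,0,0,0; 0,0,0,0,0,0; 0,0,(1/2),0,0,0; 0,0,0,0,0,0; 0,0,0,0,0,0; 0,0,0,0,0,(-1/2)]
noncomputable def A31 : M6 := !![0,0,0,0,0,0; 0,0,0,0,0,0; 1,0,0,0,0,0; 0,0,0,0,0,-1; 0,0,0,0,0,0; 0,0,0,0,0,0]
noncomputable def A32 : M6 := !![0,0,0,0,0,0; 0,0,0,0,0,0; 0,1,0,0,0,0; 0,0,0,0,0,0; 0,0,0,0,0,-1; 0,0,0,0,0,0]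
noncomputable def W1 : M6 := !![0,0,0,-1,0,0; 0,0,0,0,0,0; 0,0,0,0,0,0; 1,0,0,0,0,0; 0,0,0,0,0,0; 0,0,0,0,0,0]
noncomputable def W2 : M6 := !![0,0,0,0,0,0; 0,0,0,0,-1,0; 0,0,0,0,0,0; 0,0,0,0,0,0; 0,1,0,0,0,0; 0,0,0,0,0,0]

noncomputable def gens : Set M6 := {E1, E2, E3, E31, E32, A1, A2, A3, A31, A32, W1, W2}

noncomputable def gLie : LieSubalgebra ℝ M6 := LieSubalgebra.lieSpan ℝ M6 gens

lemma memE1 : E1 ∈ gLie := LieSubalgebra.subset_lieSpan (by simp [gens])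
lemma memE2 : E2 ∈ gLie := LieSubalgebra.subset_lieSpan (by simp [gens])
lemma memE3 : E3 ∈ gLie := LieSubalgebra.subset_lieSpan (by simp [gens])
lemma memE31 : E31 ∈ gLie := LieSubalgebra.subset_lieSpan (by simp [gens])
lemma memE32 : E32 ∈ gLie := LieSubalgebra.subset_lieSpan (by simp [gens])
lemma memA1 : A1 ∈ gLie := LieSubalgebra.subset_lieSpan (by simp [gens])
lemma memA2 : A2 ∈ gLie := LieSubalgebra.subset_lieSpan (by simp [gens])
lemma memA3 : A3 ∈ gLie := LieSubalgebra.subset_lieSpan (by simp [gens])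
lemma memA31 : A31 ∈ gLie := LieSubalgebra.subset_lieSpan (by simp [gens])
lemma memA32 : A32 ∈ gLie := LieSubalgebra.subset_lieSpan (by simp [gens])
lemma memW1 : W1 ∈ gLie := LieSubalgebra.subset_lieSpan (by simp [gens])
lemma memW2 : W2 ∈ gLie := LieSubalgebra.subset_lieSpan (by simp [gens])

noncomputable abbrev gE1 : ↥gLie := ⟨E1, memE1⟩
noncomputable abbrev gE2 : ↥gLie := ⟨E2, memE2⟩
noncomputable abbrev gE3 : ↥gLie := ⟨E3, memE3⟩
noncomputable abbrev gE31 : ↥gLie := ⟨E31, memE31⟩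
noncomputable abbrev gE32 : ↥gLie := ⟨E32, memE32⟩
noncomputable abbrev gA1 : ↥gLie := ⟨A1, memA1⟩
noncomputable abbrev gA2 : ↥gLie := ⟨A2, memA2⟩
noncomputable abbrev gA3 : ↥gLie := ⟨A3, memA3⟩
noncomputable abbrev gA31 : ↥gLie := ⟨A31, memA31⟩
noncomputable abbrev gA32 : ↥gLie := ⟨A32, memA32⟩
noncomputable abbrev gW1 : ↥gLie := ⟨W1, memW1⟩
noncomputable abbrev gW2 : ↥gLie := ⟨W2, memW2⟩

/-!
Every element of `g` has coordinates in the twelve basis matrices, because their span is closed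
under the bracket. If `x ∈ h` is not a multiple of `E3`, one of its coordinates along
`E1, E31, A1, A3, A31, W1` or along `E2, E32, A2, A3, A32, W2` is nonzero. In the first case,
brackets of `x` with `A1, A3, E31, W1`, corrected by a multiple of `E3 ∈ h`, give a nonzero
element `a • E31 + b • A31` of `h`; since `ad W1` rotates the plane spanned by `E31` and `A31`,
`h` then contains both. The second case is symmetric.
-/

lemma LieIdeal.mem_and_mem_of_lie_rotation {K L : Type*} [Field K] [LinearOrder K]
    [IsStrictOrderedRing K] [LieRing L] [LieAlgebra K L] (I : LieIdeal K L) {e a w : L}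
    (hew : ⁅e, w⁆ = a) (haw : ⁅a, w⁆ = -e) (r s : K) (hrs : r ≠ 0 ∨ s ≠ 0)
    (hmem : r • e + s • a ∈ I) : e ∈ I ∧ a ∈ I := by
  have hrot : r • a - s • e ∈ I := by
    have := lie_mem_left K L I _ w hmem
    rwa [add_lie, smul_lie, smul_lie, hew, haw, smul_neg, ← sub_eq_add_neg] at this
  have hnorm : r ^ 2 + s ^ 2 ≠ 0 := by rcases hrs with h | h <;> positivity
  have he : (r ^ 2 + s ^ 2) • e = r • (r • e + s • a) - s • (r • a - s • e) := by module
  have ha : (r ^ 2 + s ^ 2) • a = s • (r • e + s • a) + r • (r • a - s • e) := by module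
  constructor
  · rw [← LieSubmodule.mem_toSubmodule, ← Submodule.smul_mem_iff _ hnorm, he]
    exact I.sub_mem (I.smul_mem r hmem) (I.smul_mem s hrot)
  · rw [← LieSubmodule.mem_toSubmodule, ← Submodule.smul_mem_iff _ hnorm, ha]
    exact I.add_mem (I.smul_mem s hmem) (I.smul_mem r hrot)

noncomputable def basisMat : Fin 12 → M6 :=
  ![E1, E2, E3, E31, E32, A1, A2, A3, A31, A32, W1, W2]

noncomputable def coordMat : (Fin 12 → ℝ) →ₗ[ℝ] M6 := Fintype.linearCombination ℝ basisMat

lemma coordMat_apply (c : Fin 12 → ℝ) : coordMat c =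
    !![c 5 / 2, 0, 0, c 0 - c 10, 0, c 3;
      0, c 6 / 2, 0, 0, c 1 - c 11, c 4;
      c 8, c 9, c 7 / 2, c 3, c 4, c 2;
      c 10, 0, 0, -c 5 / 2, 0, -c 8;
      0, c 11, 0, 0, -c 6 / 2, -c 9;
      0, 0, 0, 0, 0, -c 7 / 2] := by
  ext i j
  simp only [coordMat, Fintype.linearCombination_apply, Fin.sum_univ_succ, Fin.sum_univ_zero,
    basisMat, Matrix.add_apply, Matrix.smul_apply,
    E1, E2, E3, E31, E32, A1, A2, A3, A31, A32, W1, W2]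
  fin_cases i <;> fin_cases j <;> simp <;> ring

noncomputable def coordBracket (c d : Fin 12 → ℝ) : Fin 12 → ℝ :=
  ![-(c 0 * d 5 - c 5 * d 0) - 2 * (c 5 * d 10 - c 10 * d 5),
    -(c 1 * d 6 - c 6 * d 1) - 2 * (c 6 * d 11 - c 11 * d 6),
    -(c 2 * d 7 - c 7 * d 2) - 2 * (c 3 * d 8 - c 8 * d 3) - 2 * (c 4 * d 9 - c 9 * d 4),
    -(c 0 * d 8 - c 8 * d 0) - (c 3 * d 5 - c 5 * d 3) / 2 - (c 3 * d 7 - c 7 * d 3) / 2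
      - (c 8 * d 10 - c 10 * d 8),
    -(c 1 * d 9 - c 9 * d 1) - (c 4 * d 6 - c 6 * d 4) / 2 - (c 4 * d 7 - c 7 * d 4) / 2
      - (c 9 * d 11 - c 11 * d 9),
    2 * (c 0 * d 10 - c 10 * d 0),
    2 * (c 1 * d 11 - c 11 * d 1),
    0,
    (c 3 * d 10 - c 10 * d 3) - (c 5 * d 8 - c 8 * d 5) / 2 + (c 7 * d 8 - c 8 * d 7) / 2,
    (c 4 * d 11 - c 11 * d 4) - (c 6 * d 9 - c 9 * d 6) / 2 + (c 7 * d 9 - c 9 * d 7) / 2,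
    -(c 5 * d 10 - c 10 * d 5),
    -(c 6 * d 11 - c 11 * d 6)]

lemma lie_coordMat (c d : Fin 12 → ℝ) :
    ⁅coordMat c, coordMat d⁆ = coordMat (coordBracket c d) := by
  rw [Ring.lie_def, coordMat_apply, coordMat_apply, coordMat_apply]
  ext i j
  simp only [Matrix.sub_apply, Matrix.mul_apply, Fin.sum_univ_six, coordBracket]
  fin_cases i <;> fin_cases j <;> simp <;> ring

lemma range_basisMat : Set.range basisMat = gens := by
  simp only [basisMat, gens, Matrix.range_cons, Matrix.range_empty, Set.union_empty,
    Set.singleton_union]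

noncomputable def coordSubalgebra : LieSubalgebra ℝ M6 :=
  { LinearMap.range coordMat with
    lie_mem' := by
      rintro _ _ ⟨c, rfl⟩ ⟨d, rfl⟩
      exact ⟨coordBracket c d, (lie_coordMat c d).symm⟩ }

lemma gLie_le_coordSubalgebra : gLie ≤ coordSubalgebra := by
  rw [gLie, LieSubalgebra.lieSpan_le, ← range_basisMat]
  rintro _ ⟨i, rfl⟩
  exact ⟨Pi.single i 1, by simp [coordMat]⟩

noncomputable def gBasis : Fin 12 → gLie :=
  ![gE1, gE2, gE3, gE31, gE32, gA1, gA2, gA3, gA31, gA32, gW1, gW2]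

noncomputable def ofCoords : (Fin 12 → ℝ) →ₗ[ℝ] gLie := Fintype.linearCombination ℝ gBasis

lemma coe_ofCoords (c : Fin 12 → ℝ) : (ofCoords c : M6) = coordMat c := by
  have hb : ∀ i, (gBasis i : M6) = basisMat i := by
    intro i; fin_cases i <;> rfl
  simp [ofCoords, coordMat, Fintype.linearCombination_apply, hb]

lemma ofCoords_single (i : Fin 12) : ofCoords (Pi.single i 1) = gBasis i := by
  simp [ofCoords]

lemma lie_ofCoords (c d : Fin 12 → ℝ) :
    ⁅ofCoords c, ofCoords d⁆ = ofCoords (coordBracket c d) :=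
  Subtype.ext <| by
    rw [LieSubalgebra.coe_bracket, coe_ofCoords, coe_ofCoords, coe_ofCoords, lie_coordMat]

lemma exists_ofCoords_eq (x : gLie) : ∃ c, ofCoords c = x := by
  obtain ⟨c, hc⟩ := gLie_le_coordSubalgebra x.2
  exact ⟨c, Subtype.ext ((coe_ofCoords c).trans hc)⟩

lemma ofCoords_eq_smul_gE3 {c : Fin 12 → ℝ} (hc : ∀ i ≠ 2, c i = 0) : ofCoords c = c 2 • gE3 := by
  have : c = c 2 • Pi.single 2 1 := by
    ext i; by_cases hi : i = 2 <;> simp [hi, hc]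
  rw [this, map_smul, ofCoords_single]
  simp [gBasis]

lemma lie_gE31_gW1 : ⁅gE31, gW1⁆ = gA31 := by
  change ⁅gBasis 3, gBasis 10⁆ = gBasis 8
  simp only [← ofCoords_single, lie_ofCoords]
  congr 1; ext k; fin_cases k <;> simp [coordBracket]

lemma lie_gA31_gW1 : ⁅gA31, gW1⁆ = -gE31 := by
  change ⁅gBasis 8, gBasis 10⁆ = -gBasis 3
  simp only [← ofCoords_single, lie_ofCoords, ← map_neg]
  congr 1; ext k; fin_cases k <;> simp [coordBracket]

lemma lie_gE32_gW2 : ⁅gE32, gW2⁆ = gA32 := by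
  change ⁅gBasis 4, gBasis 11⁆ = gBasis 9
  simp only [← ofCoords_single, lie_ofCoords]
  congr 1; ext k; fin_cases k <;> simp [coordBracket]

lemma lie_gA32_gW2 : ⁅gA32, gW2⁆ = -gE32 := by
  change ⁅gBasis 9, gBasis 11⁆ = -gBasis 4
  simp only [← ofCoords_single, lie_ofCoords, ← map_neg]
  congr 1; ext k; fin_cases k <;> simp [coordBracket]

/- `ad A3` has eigenvalue `1` on `E3`, `1/2` on `E31, E32, A31, A32` and `0` on the rest of the
basis, so `ad A3 - (ad A3)^2` is `1/4` times the projection onto the `1/2`-eigenspace; `ad A1` then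
kills `E32, A32` and scales `E31, A31` by `±1/2`. -/
lemma lie_gA1_sub_lie_gA3_lie_gA3 (c : Fin 12 → ℝ) :
    ⁅gA1, ⁅gA3, ofCoords c⁆ - ⁅gA3, ⁅gA3, ofCoords c⁆⁆⁆ =
      (c 3 / 8) • gE31 + (-c 8 / 8) • gA31 := by
  change ⁅gBasis 5, ⁅gBasis 7, _⁆ - ⁅gBasis 7, ⁅gBasis 7, _⁆⁆⁆ = _ • gBasis 3 + _ • gBasis 8
  simp only [← ofCoords_single, lie_ofCoords, ← map_smul, ← map_add, ← map_sub]
  congr 1; ext k; fin_cases k <;> simp [coordBracket]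
  all_goals ring

lemma lie_gA2_sub_lie_gA3_lie_gA3 (c : Fin 12 → ℝ) :
    ⁅gA2, ⁅gA3, ofCoords c⁆ - ⁅gA3, ⁅gA3, ofCoords c⁆⁆⁆ =
      (c 4 / 8) • gE32 + (-c 9 / 8) • gA32 := by
  change ⁅gBasis 6, ⁅gBasis 7, _⁆ - ⁅gBasis 7, ⁅gBasis 7, _⁆⁆⁆ = _ • gBasis 4 + _ • gBasis 9
  simp only [← ofCoords_single, lie_ofCoords, ← map_smul, ← map_add, ← map_sub]
  congr 1; ext k; fin_cases k <;> simp [coordBracket]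
  all_goals ring

lemma lie_gE31_add_smul_gE3 (c : Fin 12 → ℝ) :
    ⁅gE31, ofCoords c⁆ + (2 * c 8) • gE3 = (-(c 5 + c 7) / 2) • gE31 + c 10 • gA31 := by
  change ⁅gBasis 3, _⁆ + _ • gBasis 2 = _ • gBasis 3 + _ • gBasis 8
  simp only [← ofCoords_single, lie_ofCoords, ← map_smul, ← map_add]
  congr 1; ext k; fin_cases k <;> simp [coordBracket]
  ring

lemma lie_gE32_add_smul_gE3 (c : Fin 12 → ℝ) :
    ⁅gE32, ofCoords c⁆ + (2 * c 9) • gE3 = (-(c 6 + c 7) / 2) • gE32 + c 11 • gA32 := by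
  change ⁅gBasis 4, _⁆ + _ • gBasis 2 = _ • gBasis 4 + _ • gBasis 9
  simp only [← ofCoords_single, lie_ofCoords, ← map_smul, ← map_add]
  congr 1; ext k; fin_cases k <;> simp [coordBracket]
  ring

lemma lie_gE31_lie_gW1_sub_smul_gE3 (c : Fin 12 → ℝ) :
    ⁅gE31, ⁅gW1, ofCoords c⁆⁆ - (2 * c 3) • gE3 = c 0 • gE31 + c 5 • gA31 := by
  change ⁅gBasis 3, ⁅gBasis 10, _⁆⁆ - _ • gBasis 2 = _ • gBasis 3 + _ • gBasis 8
  simp only [← ofCoords_single, lie_ofCoords, ← map_smul, ← map_add, ← map_sub]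
  congr 1; ext k; fin_cases k <;> simp [coordBracket]
  ring

lemma lie_gE32_lie_gW2_sub_smul_gE3 (c : Fin 12 → ℝ) :
    ⁅gE32, ⁅gW2, ofCoords c⁆⁆ - (2 * c 4) • gE3 = c 1 • gE32 + c 6 • gA32 := by
  change ⁅gBasis 4, ⁅gBasis 11, _⁆⁆ - _ • gBasis 2 = _ • gBasis 4 + _ • gBasis 9
  simp only [← ofCoords_single, lie_ofCoords, ← map_smul, ← map_add, ← map_sub]
  congr 1; ext k; fin_cases k <;> simp [coordBracket]
  ring

lemma gE31_mem_and_gA31_mem {h : LieIdeal ℝ gLie} (hE3 : gE3 ∈ h) {c : Fin 12 → ℝ}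
    (hx : ofCoords c ∈ h) (hc : c 0 ≠ 0 ∨ c 3 ≠ 0 ∨ c 5 ≠ 0 ∨ c 7 ≠ 0 ∨ c 8 ≠ 0 ∨ c 10 ≠ 0) :
    gE31 ∈ h ∧ gA31 ∈ h := by
  have rotate := h.mem_and_mem_of_lie_rotation lie_gE31_gW1 lie_gA31_gW1
  by_cases h38 : c 3 ≠ 0 ∨ c 8 ≠ 0
  · refine rotate (c 3 / 8) (-c 8 / 8) (by simpa using h38) ?_
    rw [← lie_gA1_sub_lie_gA3_lie_gA3]
    exact h.lie_mem (h.sub_mem (h.lie_mem hx) (h.lie_mem (h.lie_mem hx)))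
  by_cases h05 : c 0 ≠ 0 ∨ c 5 ≠ 0
  · refine rotate (c 0) (c 5) h05 ?_
    rw [← lie_gE31_lie_gW1_sub_smul_gE3]
    exact h.sub_mem (h.lie_mem (h.lie_mem hx)) (h.smul_mem _ hE3)
  · refine rotate (-(c 5 + c 7) / 2) (c 10) (by push Not at h38 h05; simp_all) ?_
    rw [← lie_gE31_add_smul_gE3]
    exact h.add_mem (h.lie_mem hx) (h.smul_mem _ hE3)

lemma gE32_mem_and_gA32_mem {h : LieIdeal ℝ gLie} (hE3 : gE3 ∈ h) {c : Fin 12 → ℝ}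
    (hx : ofCoords c ∈ h) (hc : c 1 ≠ 0 ∨ c 4 ≠ 0 ∨ c 6 ≠ 0 ∨ c 7 ≠ 0 ∨ c 9 ≠ 0 ∨ c 11 ≠ 0) :
    gE32 ∈ h ∧ gA32 ∈ h := by
  have rotate := h.mem_and_mem_of_lie_rotation lie_gE32_gW2 lie_gA32_gW2
  by_cases h49 : c 4 ≠ 0 ∨ c 9 ≠ 0
  · refine rotate (c 4 / 8) (-c 9 / 8) (by simpa using h49) ?_
    rw [← lie_gA2_sub_lie_gA3_lie_gA3]
    exact h.lie_mem (h.sub_mem (h.lie_mem hx) (h.lie_mem (h.lie_mem hx)))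
  by_cases h16 : c 1 ≠ 0 ∨ c 6 ≠ 0
  · refine rotate (c 1) (c 6) h16 ?_
    rw [← lie_gE32_lie_gW2_sub_smul_gE3]
    exact h.sub_mem (h.lie_mem (h.lie_mem hx)) (h.smul_mem _ hE3)
  · refine rotate (-(c 6 + c 7) / 2) (c 11) (by push Not at h49 h16; simp_all) ?_
    rw [← lie_gE32_add_smul_gE3]
    exact h.add_mem (h.lie_mem hx) (h.smul_mem _ hE3)

theorem ideal_strictly_containing_spanE3_contains_h3_or_h3'
    (h : LieIdeal ℝ ↥gLie)
    (hgt : Submodule.span ℝ ({gE3} : Set ↥gLie) < (h : Submodule ℝ ↥gLie)) :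
    (gE3 ∈ h ∧ gE31 ∈ h ∧ gA31 ∈ h) ∨ (gE3 ∈ h ∧ gE32 ∈ h ∧ gA32 ∈ h) := by
  have hE3 : gE3 ∈ h := hgt.le (Submodule.mem_span_singleton_self gE3)
  obtain ⟨x, hxh, hx⟩ := SetLike.exists_of_lt hgt
  obtain ⟨c, rfl⟩ := exists_ofCoords_eq x
  by_cases h1 : c 0 ≠ 0 ∨ c 3 ≠ 0 ∨ c 5 ≠ 0 ∨ c 7 ≠ 0 ∨ c 8 ≠ 0 ∨ c 10 ≠ 0
  · exact Or.inl ⟨hE3, gE31_mem_and_gA31_mem hE3 hxh h1⟩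
  by_cases h2 : c 1 ≠ 0 ∨ c 4 ≠ 0 ∨ c 6 ≠ 0 ∨ c 7 ≠ 0 ∨ c 9 ≠ 0 ∨ c 11 ≠ 0
  · exact Or.inr ⟨hE3, gE32_mem_and_gA32_mem hE3 hxh h2⟩
  refine absurd ?_ hx
  rw [ofCoords_eq_smul_gE3]
  · exact Submodule.smul_mem _ _ (Submodule.mem_span_singleton_self gE3)
  · push Not at h1 h2
    intro i hi
    fin_cases i <;> simp_all
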